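/- arXiv:1309.6156 — 2 statements merged into one kernel-verified Lean document; each statement's English description precedes it below -/
import Mathlib

section
/- Let L be a line bundle over M and suppose J¹L carries a Lie algebroid structure such that the classical Spencer operator D is a Spencer operator on J¹L relative to the projection pr : J¹L → L. Define {u, v} := pr([j¹u, j¹v]). Then [j¹u, j¹v] = j¹{u, v} for all u, v ∈ Γ(L), and {·,·} is a Lie bracket on Γ(L). -/
/-- if `J¹L` carries a Lie algebroid structure for which the
classical Spencer operator `D` is a Spencer operator relative to
`pr : J¹L → L`, then setting `{u,v} := pr([j¹u, j¹v])` one has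
`[j¹u, j¹v] = j¹{u,v}` for all `u, v ∈ Γ(L)`, and `{·,·}` is a Lie bracket
(antisymmetric and satisfying the Jacobi identity) on `Γ(L)`.
Algebraic model: `A = C^∞(M)`, vector fields are `Derivation ℝ A A`; `LΓ`,
`J` are the `A`-modules of sections of `L` and `J¹L`; the kernel of `D`
consists exactly of the holonomic sections (`hker`), and `br` satisfies the
Spencer compatibility (`hcompat`, equation (5) of the paper). -/
theorem jacobi_from_spencer_algebroid
    (A : Type*) [CommRing A] [Algebra ℝ A]
    (LΓ J : Type*)
    [AddCommGroup LΓ] [Module A LΓ] [Module ℝ LΓ]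
    [AddCommGroup J] [Module A J] [Module ℝ J]
    (br : J → J → J)
    (hanti : ∀ α β, br α β = - br β α)
    (hjacobi : ∀ α β γ, br α (br β γ) = br (br α β) γ + br β (br α γ))
    (pr : J →ₗ[A] LΓ) (j1 : LΓ →ₗ[ℝ] J)
    (hpr : ∀ u : LΓ, pr (j1 u) = u)
    (ρ : J → Derivation ℝ A A)
    (nabla : J → LΓ → LΓ)
    (hnabla0 : ∀ α : J, nabla α 0 = 0)
    (D : Derivation ℝ A A → J → LΓ)
    (hker : ∀ ξ : J, (∀ X, D X ξ = 0) ↔ ξ = j1 (pr ξ))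
    (hcompat : ∀ (X : Derivation ℝ A A) (α α' : J),
      D X (br α α') =
        nabla α (D X α') - D ⁅ρ α, X⁆ α' - nabla α' (D X α) + D ⁅ρ α', X⁆ α) :
    (∀ u v : LΓ, br (j1 u) (j1 v) = j1 (pr (br (j1 u) (j1 v)))) ∧
    (∀ u v : LΓ, pr (br (j1 u) (j1 v)) = - pr (br (j1 v) (j1 u))) ∧
    (∀ u v w : LΓ,
      pr (br (j1 u) (j1 (pr (br (j1 v) (j1 w))))) =
        pr (br (j1 (pr (br (j1 u) (j1 v)))) (j1 w)) +
          pr (br (j1 v) (j1 (pr (br (j1 u) (j1 w)))))) := by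
  have hDj1 : ∀ (u : LΓ) (X : Derivation ℝ A A), D X (j1 u) = 0 := by
    intro u
    rw [hker]
    rw [hpr]
  have hhol : ∀ u v : LΓ, br (j1 u) (j1 v) = j1 (pr (br (j1 u) (j1 v))) := by
    intro u v
    rw [← hker]
    intro X
    rw [hcompat X (j1 u) (j1 v), hDj1, hDj1, hDj1, hDj1, hnabla0, hnabla0]
    simp
  refine ⟨hhol, ?_, ?_⟩
  · intro u v
    rw [hanti (j1 u) (j1 v), map_neg]
  · intro u v w
    have := hjacobi (j1 u) (j1 v) (j1 w)
    rw [hhol v w, hhol u v, hhol u w] at this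
    have := congrArg pr this
    simpa using this
end

section
/- Let Λ be a bivector field and R a vector field on M, and define {f, g} = Λ(df, dg) + f R(g) − g R(f) on C^∞(M). If [Λ, Λ] = 2 R ∧ Λ and [Λ, R] = 0 (Schouten brackets), then {·,·} satisfies the Jacobi identity, making (C^∞(M), {·,·}) a Lie algebra. -/
/-- for a bivector `Λ` and a vector field `R` on `M`, if
`[Λ,Λ] = 2 R ∧ Λ` and `[Λ,R] = 0` (Schouten brackets), then the bracket
`{f,g} = Λ(df,dg) + f R(g) − g R(f)` on `C^∞(M)` satisfies the Jacobi
identity.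
Algebraic model: `A = C^∞(M)`, `Ω¹ = KaehlerDifferential ℝ A` with
`d = KaehlerDifferential.D`, `Λ : Ω¹ × Ω¹ → A` an alternating `A`-bilinear
map, `R` a derivation.  The two Schouten-bracket conditions are expressed by
their standard evaluations on exact 1-forms:
`[Λ,Λ](df,dg,dh) = 2(Λ(dΛ(df,dg),dh) + cyclic)` and
`(R∧Λ)(df,dg,dh) = R(f)Λ(dg,dh) + R(g)Λ(dh,df) + R(h)Λ(df,dg)`,
`[Λ,R](df,dg) = R(Λ(df,dg)) − Λ(d(Rf),dg) − Λ(df,d(Rg))`. -/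
theorem jacobi_pair_bracket_jacobi_identity
    (A : Type*) [CommRing A] [Algebra ℝ A]
    (Λ : KaehlerDifferential ℝ A →ₗ[A] KaehlerDifferential ℝ A →ₗ[A] A)
    (R : Derivation ℝ A A)
    (halt : ∀ ω : KaehlerDifferential ℝ A, Λ ω ω = 0)
    -- [Λ, Λ] = 2 R ∧ Λ :
    (hΛΛ : ∀ f g h : A,
      Λ (KaehlerDifferential.D ℝ A
          (Λ (KaehlerDifferential.D ℝ A f) (KaehlerDifferential.D ℝ A g)))
        (KaehlerDifferential.D ℝ A h) +
      Λ (KaehlerDifferential.D ℝ A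
          (Λ (KaehlerDifferential.D ℝ A g) (KaehlerDifferential.D ℝ A h)))
        (KaehlerDifferential.D ℝ A f) +
      Λ (KaehlerDifferential.D ℝ A
          (Λ (KaehlerDifferential.D ℝ A h) (KaehlerDifferential.D ℝ A f)))
        (KaehlerDifferential.D ℝ A g) =
      R f * Λ (KaehlerDifferential.D ℝ A g) (KaehlerDifferential.D ℝ A h) +
      R g * Λ (KaehlerDifferential.D ℝ A h) (KaehlerDifferential.D ℝ A f) +
      R h * Λ (KaehlerDifferential.D ℝ A f) (KaehlerDifferential.D ℝ A g))
    -- [Λ, R] = 0 :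
    (hΛR : ∀ f g : A,
      R (Λ (KaehlerDifferential.D ℝ A f) (KaehlerDifferential.D ℝ A g)) -
        Λ (KaehlerDifferential.D ℝ A (R f)) (KaehlerDifferential.D ℝ A g) -
        Λ (KaehlerDifferential.D ℝ A f) (KaehlerDifferential.D ℝ A (R g)) = 0) :
    -- Jacobi identity for {f,g} = Λ(df,dg) + f R(g) − g R(f) :
    ∀ f g h : A,
      (fun x y : A =>
        Λ (KaehlerDifferential.D ℝ A x) (KaehlerDifferential.D ℝ A y)
          + x * R y - y * R x) f
        ((fun x y : A =>
          Λ (KaehlerDifferential.D ℝ A x) (KaehlerDifferential.D ℝ A y)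
            + x * R y - y * R x) g h) +
      (fun x y : A =>
        Λ (KaehlerDifferential.D ℝ A x) (KaehlerDifferential.D ℝ A y)
          + x * R y - y * R x) g
        ((fun x y : A =>
          Λ (KaehlerDifferential.D ℝ A x) (KaehlerDifferential.D ℝ A y)
            + x * R y - y * R x) h f) +
      (fun x y : A =>
        Λ (KaehlerDifferential.D ℝ A x) (KaehlerDifferential.D ℝ A y)
          + x * R y - y * R x) h
        ((fun x y : A =>
          Λ (KaehlerDifferential.D ℝ A x) (KaehlerDifferential.D ℝ A y)
            + x * R y - y * R x) f g) = 0 := by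

  intro f g h
  have hsk : ∀ ω η : KaehlerDifferential ℝ A, Λ ω η = - Λ η ω := by
    intro ω η
    have h1 := halt (ω + η)
    simp only [map_add, LinearMap.add_apply, halt] at h1
    linear_combination h1
  simp only [Derivation.leibniz, map_add, map_sub, map_smul, LinearMap.add_apply,
    LinearMap.sub_apply, LinearMap.smul_apply, smul_eq_mul]
  linear_combination (-(hΛΛ f g h)) + f * hΛR g h + g * hΛR h f + h * hΛR f g
    + hsk (KaehlerDifferential.D ℝ A f) (KaehlerDifferential.D ℝ A
        (Λ (KaehlerDifferential.D ℝ A g) (KaehlerDifferential.D ℝ A h)))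
    + hsk (KaehlerDifferential.D ℝ A g) (KaehlerDifferential.D ℝ A
        (Λ (KaehlerDifferential.D ℝ A h) (KaehlerDifferential.D ℝ A f)))
    + hsk (KaehlerDifferential.D ℝ A h) (KaehlerDifferential.D ℝ A
        (Λ (KaehlerDifferential.D ℝ A f) (KaehlerDifferential.D ℝ A g)))
    + g * hsk (KaehlerDifferential.D ℝ A f) (KaehlerDifferential.D ℝ A (R h))
    + h * hsk (KaehlerDifferential.D ℝ A g) (KaehlerDifferential.D ℝ A (R f))
    + f * hsk (KaehlerDifferential.D ℝ A h) (KaehlerDifferential.D ℝ A (R g))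
    - R h * hsk (KaehlerDifferential.D ℝ A f) (KaehlerDifferential.D ℝ A g)
    - R g * hsk (KaehlerDifferential.D ℝ A f) (KaehlerDifferential.D ℝ A h)
    - R f * hsk (KaehlerDifferential.D ℝ A g) (KaehlerDifferential.D ℝ A h)
end
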